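/- arXiv:1912.03244 — 2 statements merged into one kernel-verified Lean document; each statement's English description precedes it below -/
import Mathlib

section
/- Let g ∈ 𝒢 be positive and continuous, let B = (b_n)_{n≥1} be a sequence of positive integers, and suppose N ≥ 1 satisfies ρ_{[0, B_N]}(g) < (√2 + 1)². Then there exists K > 0 such that for all n ≥ N + 1, d_n(g,B) ≤ √( ∑_{i=B_{n−1}}^{B_n − 1} ( (log ρ_{[0,i]}(g))²/4 + K (log ρ_{[0,i]}(g))³ ) ). -/
open Filter Topology MeasureTheory

noncomputable section

/-- Prepend a symbol: `(cons s x) 0 = s` and `(cons s x) (i+1) = x i`. -/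
def cons {S : Type*} (s : S) (x : ℕ → S) : ℕ → S := fun n =>
  match n with
  | 0 => s
  | Nat.succ k => x k

/-- Membership in the class `𝒢`: `g` is a (bounded) Borel function with
`g ≥ 0` and `∑_{s ∈ S} g (s x) = 1` for every `x ∈ X₊ = S^{ℕ}`. -/
def MemG {S : Type*} [Fintype S] [MeasurableSpace S] (g : (ℕ → S) → ℝ) : Prop :=
  Measurable g ∧ (∀ x, 0 ≤ g x) ∧ ∀ x : ℕ → S, ∑ s : S, g (cons s x) = 1

/-- The left shift `T` on `X = S^{ℤ}`. -/
def shiftZ {S : Type*} (y : ℤ → S) : ℤ → S := fun i => y (i + 1)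

/-- The natural extension `g̃ : S^{ℤ} → ℝ` of `g : S^{ℕ} → ℝ`. -/
def gtilde {S : Type*} (g : (ℕ → S) → ℝ) (y : ℤ → S) : ℝ :=
  g fun n : ℕ => y (n : ℤ)

/-- Replace the coordinates of `x` in `[m, n]` by the configuration `ζ`. -/
def patch {S : Type*} (m n : ℤ) (ζ : {i : ℤ // i ∈ Finset.Icc m n} → S)
    (x : ℤ → S) : ℤ → S :=
  fun j => if h : j ∈ Finset.Icc m n then ζ ⟨j, h⟩ else x j

/-- `π^g_{[m,n]}([ζ] | x) = ∏_{i=m}^{n} g̃(T^i z)` where `z` agrees with `ζ` on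
`[m,n]` and with `x` elsewhere. -/
def piCond {S : Type*} (g : (ℕ → S) → ℝ) (m n : ℤ)
    (ζ : {i : ℤ // i ∈ Finset.Icc m n} → S) (x : ℤ → S) : ℝ :=
  ∏ i ∈ Finset.Icc m n, gtilde g (fun j => patch m n ζ x (j + i))

/-- Partial sums `B_n = b_1 + ⋯ + b_n` (with `B_0 = 0`). -/
def Bsum (b : ℕ → ℕ) (n : ℕ) : ℕ := ∑ k ∈ Finset.Icc 1 n, b k

/-- Left endpoint of `J_n = [1 - B_n, -B_{n-1}]`. -/
def Jlo (b : ℕ → ℕ) (n : ℕ) : ℤ := 1 - (Bsum b n : ℤ)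

/-- Right endpoint of `J_n = [1 - B_n, -B_{n-1}]`. -/
def Jhi (b : ℕ → ℕ) (n : ℕ) : ℤ := -(Bsum b (n - 1) : ℤ)

/-- `d_n(g,B) = sup { (1/2) ∑_{ζ ∈ S^{J_n}} |π^g_{J_n}([ζ]|x) - π^g_{J_n}([ζ]|y)| :
x_i = y_i for all i ∈ [1 - B_{n-1}, 0] }`. -/
def dSeq {S : Type*} [Fintype S] [DecidableEq S]
    (g : (ℕ → S) → ℝ) (b : ℕ → ℕ) (n : ℕ) : ℝ :=
  sSup {r : ℝ | ∃ x y : ℤ → S,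
    (∀ i : ℤ, 1 - (Bsum b (n - 1) : ℤ) ≤ i → i ≤ 0 → x i = y i) ∧
    r = (1 / 2) * ∑ ζ : {i : ℤ // i ∈ Finset.Icc (Jlo b n) (Jhi b n)} → S,
      |piCond g (Jlo b n) (Jhi b n) ζ x - piCond g (Jlo b n) (Jhi b n) ζ y|}

/-- `ρ_{[0,n]}(f) = sup { f x / f y : x_i = y_i for 0 ≤ i ≤ n }` (for `f` on `X₊`). -/
def rhoVar {S : Type*} (f : (ℕ → S) → ℝ) (n : ℕ) : ℝ :=
  sSup {r : ℝ | ∃ x y : ℕ → S, (∀ i ≤ n, x i = y i) ∧ r = f x / f y}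

/-!
Write `P`, `Q` for the laws `π^g_{J_n}(· | x)`, `π^g_{J_n}(· | y)` and `A = ∑ √(P Q)` for their
Hellinger affinity. Peeling the sites of `J_n` off from the left, the factor `g̃ ∘ Tⁱ` at site `i`
is a probability kernel in the symbol at `i`, and its versions under `x` and `y` differ by a
ratio of at most `ρ_{[0,-i]}(g)`, since the coordinates in `[i + 1, 0]` agree; such a site lowers
`A` by at most `(√ρ_{[0,-i]} - 1)² / 2`. Cauchy–Schwarz gives `TV(P, Q)² ≤ 2 (1 - A)`, hence
`d_n² ≤ ∑_i (√ρ_{[0,i]} - 1)²`, and `(√r - 1)² ≤ (log r)²/4 + (r/4) (log r)³` for `r ≥ 1`.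
Finally `ρ_{[0,i]} ≤ R`, a bound for the ratios of the continuous positive `g` on the compact
space `X₊`, so `K = R/4` works.
-/

open Finset hiding cons

section Hellinger

variable {ι : Type*} [Fintype ι]

def hellingerAffinity (P Q : ι → ℝ) : ℝ := ∑ i, √(P i * Q i)

lemma sum_sqrt_sub_sqrt_sq {P Q : ι → ℝ} (hP : ∀ i, 0 ≤ P i) (hQ : ∀ i, 0 ≤ Q i) :
    ∑ i, (√(P i) - √(Q i)) ^ 2 = ∑ i, P i + ∑ i, Q i - 2 * hellingerAffinity P Q := by
  have h : ∀ i, (√(P i) - √(Q i)) ^ 2 = P i + Q i - 2 * √(P i * Q i) := fun i => by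
    rw [sub_sq, Real.sq_sqrt (hP i), Real.sq_sqrt (hQ i), Real.sqrt_mul (hP i)]; ring
  simp only [h, sum_sub_distrib, sum_add_distrib, ← mul_sum, hellingerAffinity]

lemma sum_sqrt_add_sqrt_sq {P Q : ι → ℝ} (hP : ∀ i, 0 ≤ P i) (hQ : ∀ i, 0 ≤ Q i) :
    ∑ i, (√(P i) + √(Q i)) ^ 2 = ∑ i, P i + ∑ i, Q i + 2 * hellingerAffinity P Q := by
  have h : ∀ i, (√(P i) + √(Q i)) ^ 2 = P i + Q i + 2 * √(P i * Q i) := fun i => by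
    rw [add_sq, Real.sq_sqrt (hP i), Real.sq_sqrt (hQ i), Real.sqrt_mul (hP i)]; ring
  simp only [h, sum_add_distrib, ← mul_sum, hellingerAffinity]

variable {P Q : ι → ℝ}

lemma hellingerAffinity_le_one (hP : ∀ i, 0 ≤ P i) (hQ : ∀ i, 0 ≤ Q i)
    (hP1 : ∑ i, P i = 1) (hQ1 : ∑ i, Q i = 1) : hellingerAffinity P Q ≤ 1 := by
  have := sum_sqrt_sub_sqrt_sq hP hQ
  rw [hP1, hQ1] at this
  have : 0 ≤ ∑ i, (√(P i) - √(Q i)) ^ 2 := sum_nonneg fun i _ => sq_nonneg _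
  linarith

lemma half_sum_abs_sub_sq_le (hP : ∀ i, 0 ≤ P i) (hQ : ∀ i, 0 ≤ Q i)
    (hP1 : ∑ i, P i = 1) (hQ1 : ∑ i, Q i = 1) :
    ((1 / 2) * ∑ i, |P i - Q i|) ^ 2 ≤ 2 * (1 - hellingerAffinity P Q) := by
  have hfactor : ∀ i, |P i - Q i| ^ 2 ≤ (√(P i) - √(Q i)) ^ 2 * (√(P i) + √(Q i)) ^ 2 :=
    fun i => le_of_eq <| by
      rw [sq_abs, ← mul_pow]
      congr 1
      linear_combination -Real.sq_sqrt (hP i) + Real.sq_sqrt (hQ i)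
  have hcs := sum_sq_le_sum_mul_sum_of_sq_le_mul univ (fun i _ => sq_nonneg _)
    (fun i _ => sq_nonneg _) (fun i _ => hfactor i)
  rw [sum_sqrt_sub_sqrt_sq hP hQ, sum_sqrt_add_sqrt_sq hP hQ, hP1, hQ1] at hcs
  nlinarith [sq_nonneg (1 - hellingerAffinity P Q)]

end Hellinger

lemma sqrt_sub_sqrt_sq_le {u v ρ : ℝ} (hv : 0 ≤ v) (hvu : v ≤ u) (hu : u ≤ ρ * v) :
    (√u - √v) ^ 2 ≤ (√ρ - 1) ^ 2 * v := by
  have h1 : √u ≤ √ρ * √v := by rw [← Real.sqrt_mul' _ hv]; exact Real.sqrt_le_sqrt hu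
  have h2 : √v ≤ √u := Real.sqrt_le_sqrt hvu
  calc (√u - √v) ^ 2 ≤ ((√ρ - 1) * √v) ^ 2 := pow_le_pow_left₀ (by linarith) (by linarith) 2
    _ = (√ρ - 1) ^ 2 * v := by rw [mul_pow, Real.sq_sqrt hv]

lemma one_sub_le_hellingerAffinity {ι : Type*} [Fintype ι] {u v : ι → ℝ} {ρ : ℝ}
    (hu : ∀ i, 0 ≤ u i) (hv : ∀ i, 0 ≤ v i) (hu1 : ∑ i, u i = 1) (hv1 : ∑ i, v i = 1)
    (huv : ∀ i, u i ≤ ρ * v i) (hvu : ∀ i, v i ≤ ρ * u i) :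
    1 - (√ρ - 1) ^ 2 / 2 ≤ hellingerAffinity u v := by
  have hsite : ∀ i, (√(u i) - √(v i)) ^ 2 ≤ (√ρ - 1) ^ 2 * v i := fun i => by
    rcases le_total (v i) (u i) with h | h
    · exact sqrt_sub_sqrt_sq_le (hv i) h (huv i)
    · calc (√(u i) - √(v i)) ^ 2 = (√(v i) - √(u i)) ^ 2 := by ring
        _ ≤ (√ρ - 1) ^ 2 * u i := sqrt_sub_sqrt_sq_le (hu i) h (hvu i)
        _ ≤ (√ρ - 1) ^ 2 * v i := by gcongr
  have := sum_le_sum fun i (_ : i ∈ univ) => hsite i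
  rw [sum_sqrt_sub_sqrt_sq hu hv, ← mul_sum, hu1, hv1] at this
  linarith

lemma sqrt_sub_one_sq_le {r : ℝ} (hr : 1 ≤ r) :
    (√r - 1) ^ 2 ≤ Real.log r ^ 2 / 4 + r / 4 * Real.log r ^ 3 := by
  have hr0 : 0 < r := by linarith
  have hs0 : 0 < √r := Real.sqrt_pos.2 hr0
  have hlog : 0 ≤ Real.log r := Real.log_nonneg hr
  have hsqrt : √r - 1 ≤ √r * (Real.log r / 2) := by
    have := Real.one_sub_inv_le_log_of_pos hs0
    rw [Real.log_sqrt hr0.le] at this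
    have := mul_le_mul_of_nonneg_left this hs0.le
    rwa [mul_sub, mul_one, mul_inv_cancel₀ hs0.ne'] at this
  have hlin : r - 1 ≤ r * Real.log r := by
    have := mul_le_mul_of_nonneg_left (Real.one_sub_inv_le_log_of_pos hr0) hr0.le
    rwa [mul_sub, mul_one, mul_inv_cancel₀ hr0.ne'] at this
  have h1 : 1 ≤ √r := Real.one_le_sqrt.2 hr
  calc (√r - 1) ^ 2 ≤ (√r * (Real.log r / 2)) ^ 2 := pow_le_pow_left₀ (by linarith) hsqrt 2
    _ = Real.log r ^ 2 / 4 + (r - 1) * Real.log r ^ 2 / 4 := by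
      rw [mul_pow, Real.sq_sqrt hr0.le]; ring
    _ ≤ Real.log r ^ 2 / 4 + r * Real.log r * Real.log r ^ 2 / 4 := by gcongr
    _ = Real.log r ^ 2 / 4 + r / 4 * Real.log r ^ 3 := by ring

section Configurations

variable {S : Type*} {m M : ℤ}

abbrev Config (S : Type*) (m M : ℤ) : Type _ := {i : ℤ // i ∈ Icc m M} → S

def consConfig (s : S) (ζ : Config S m M) : Config S (m - 1) M :=
  fun i => if h : i.1 ∈ Icc m M then ζ ⟨i.1, h⟩ else s

def consConfigEquiv (hm : m - 1 ≤ M) :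
    S × Config S m M ≃ Config S (m - 1) M where
  toFun p := consConfig p.1 p.2
  invFun ζ := (ζ ⟨m - 1, mem_Icc.2 ⟨le_rfl, hm⟩⟩,
    fun i => ζ ⟨i.1, by have := mem_Icc.1 i.2; rw [mem_Icc]; omega⟩)
  left_inv p := by
    have : m - 1 ∉ Icc m M := by simp
    ext : 1
    · simp [consConfig, this]
    · funext i
      simp [consConfig, i.2]
  right_inv ζ := by
    funext i
    by_cases h : i.1 ∈ Icc m M
    · simp [consConfig, h]
    · have : i.1 = m - 1 := by have := mem_Icc.1 i.2; rw [mem_Icc] at h; omega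
      simp only [consConfig, dif_neg h]
      exact congrArg ζ (Subtype.ext this.symm)

lemma sum_consConfig [Fintype S] (hm : m - 1 ≤ M) (f : Config S (m - 1) M → ℝ) :
    ∑ ζ, f ζ = ∑ s, ∑ ζ : Config S m M, f (consConfig s ζ) := by
  rw [← (consConfigEquiv hm).sum_comp, Fintype.sum_prod_type]
  rfl

lemma patch_consConfig (hm : m - 1 ≤ M) (s : S) (ζ : Config S m M) (z : ℤ → S) :
    patch (m - 1) M (consConfig s ζ) z = Function.update (patch m M ζ z) (m - 1) s := by
  funext j
  by_cases hj : j = m - 1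
  · subst hj
    simp [patch, consConfig, hm]
  · rw [Function.update_of_ne hj]
    have hmem : j ∈ Icc (m - 1) M ↔ j ∈ Icc m M := by simp only [mem_Icc]; omega
    by_cases h : j ∈ Icc m M
    · simp [patch, consConfig, h, hmem.2 h]
    · simp [patch, h, mt hmem.1 h]

lemma piCond_consConfig (g : (ℕ → S) → ℝ) (hm : m - 1 ≤ M) (s : S)
    (ζ : Config S m M) (z : ℤ → S) :
    piCond g (m - 1) M (consConfig s ζ) z
      = g (cons s fun q : ℕ => patch m M ζ z (q + m)) * piCond g m M ζ z := by
  have hnot : m - 1 ∉ Icc m M := by simp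
  rw [piCond, patch_consConfig hm, ← insert_Icc_left_eq_Icc_sub_one hm, prod_insert hnot, piCond]
  congr 1
  · unfold gtilde
    congr 1
    funext q
    cases q with
    | zero => simp [cons]
    | succ k =>
      simp only [cons]
      rw [Function.update_of_ne (by push_cast; omega)]
      congr 1
      push_cast
      ring
  · refine prod_congr rfl fun i hi => ?_
    have := (mem_Icc.1 hi).1
    unfold gtilde
    congr 1
    funext q
    exact Function.update_of_ne (by omega) _ _

lemma piCond_of_lt (g : (ℕ → S) → ℝ) (h : M < m) (ζ : Config S m M) (z : ℤ → S) :
    piCond g m M ζ z = 1 := by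
  rw [piCond, Icc_eq_empty_of_lt h, prod_empty]

lemma sum_piCond_eq_one [Fintype S] {g : (ℕ → S) → ℝ} (hg : ∀ x, ∑ s, g (cons s x) = 1)
    (hm : m ≤ M + 1) (z : ℤ → S) : ∑ ζ : Config S m M, piCond g m M ζ z = 1 := by
  induction m, hm using Int.leInductionDown with
  | base =>
    have : IsEmpty {i : ℤ // i ∈ Icc (M + 1) M} := ⟨fun i => by simpa using i.2⟩
    simp [piCond_of_lt g (lt_add_one M)]
  | pred m hm ih =>
    rw [sum_consConfig (by omega), sum_comm]
    simp only [piCond_consConfig g (by omega : m - 1 ≤ M), ← sum_mul, hg, one_mul, ih]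

lemma piCond_nonneg {g : (ℕ → S) → ℝ} (hg : ∀ x, 0 ≤ g x) (ζ : Config S m M) (z : ℤ → S) :
    0 ≤ piCond g m M ζ z :=
  prod_nonneg fun _ _ => hg _

lemma patch_eq_patch {x y : ℤ → S} (hxy : ∀ i, M + 1 ≤ i → i ≤ 0 → x i = y i) (ζ : Config S m M)
    {j : ℤ} (hmj : m ≤ j) (hj : j ≤ 0) : patch m M ζ x j = patch m M ζ y j := by
  unfold patch
  split_ifs with h
  · rfl
  · exact hxy j (by rw [mem_Icc] at h; omega) hj

end Configurations

section Chain

variable {S : Type*} [Fintype S] {g : (ℕ → S) → ℝ} {m M : ℤ} {x y : ℤ → S}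

/- The kernel at site `m - 1` reads the coordinates `m - 1, m, …` as its entries `0, 1, …`, so
agreement on `[m, 0]` is agreement on its entries `1, …, -(m - 1)`. -/
lemma mul_hellingerAffinity_piCond_le (hg : ∀ x, ∑ s, g (cons s x) = 1) (hg0 : ∀ x, 0 ≤ g x)
    {ρ : ℕ → ℝ} (hρ : ∀ k a c, (∀ i ≤ k, a i = c i) → g a ≤ ρ k * g c) (hm : m - 1 ≤ M)
    (hxy : ∀ i, M + 1 ≤ i → i ≤ 0 → x i = y i) :
    (1 - (√(ρ (-(m - 1)).toNat) - 1) ^ 2 / 2)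
        * hellingerAffinity (piCond g m M · x) (piCond g m M · y)
      ≤ hellingerAffinity (piCond g (m - 1) M · x) (piCond g (m - 1) M · y) := by
  rw [hellingerAffinity, hellingerAffinity, sum_consConfig hm, sum_comm, mul_sum]
  refine sum_le_sum fun ζ _ => ?_
  set u := fun s => g (cons s fun q : ℕ => patch m M ζ x (q + m))
  set v := fun s => g (cons s fun q : ℕ => patch m M ζ y (q + m))
  have hagree : ∀ s, ∀ i ≤ (-(m - 1)).toNat,
      cons s (fun q : ℕ => patch m M ζ x (q + m)) i
        = cons s (fun q : ℕ => patch m M ζ y (q + m)) i := by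
    rintro s (_ | i) hi
    · rfl
    · exact patch_eq_patch hxy ζ (by omega) (by omega)
  have hsite : 1 - (√(ρ (-(m - 1)).toNat) - 1) ^ 2 / 2 ≤ hellingerAffinity u v :=
    one_sub_le_hellingerAffinity (fun _ => hg0 _) (fun _ => hg0 _) (hg _) (hg _)
      (fun s => hρ _ _ _ (hagree s)) (fun s => hρ _ _ _ fun i hi => (hagree s i hi).symm)
  calc _ ≤ hellingerAffinity u v * √(piCond g m M ζ x * piCond g m M ζ y) :=
        mul_le_mul_of_nonneg_right hsite (Real.sqrt_nonneg _)
    _ = _ := by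
      rw [hellingerAffinity, sum_mul]
      refine sum_congr rfl fun s _ => ?_
      rw [piCond_consConfig g hm, piCond_consConfig g hm,
        ← Real.sqrt_mul (mul_nonneg (hg0 _) (hg0 _))]
      congr 1
      ring

lemma one_sub_le_hellingerAffinity_piCond (hg : ∀ x, ∑ s, g (cons s x) = 1)
    (hg0 : ∀ x, 0 ≤ g x) {ρ : ℕ → ℝ} (hρ : ∀ k a c, (∀ i ≤ k, a i = c i) → g a ≤ ρ k * g c)
    (hm : m ≤ M + 1) (hxy : ∀ i, M + 1 ≤ i → i ≤ 0 → x i = y i) :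
    1 - (∑ i ∈ Icc m M, (√(ρ (-i).toNat) - 1) ^ 2) / 2
      ≤ hellingerAffinity (piCond g m M · x) (piCond g m M · y) := by
  induction m, hm using Int.leInductionDown with
  | base =>
    have : IsEmpty {i : ℤ // i ∈ Icc (M + 1) M} := ⟨fun i => by simpa using i.2⟩
    simp [hellingerAffinity, piCond_of_lt g (lt_add_one M)]
  | pred m hm ih =>
    have hsplit : ∑ i ∈ Icc (m - 1) M, (√(ρ (-i).toNat) - 1) ^ 2
        = (√(ρ (-(m - 1)).toNat) - 1) ^ 2 + ∑ i ∈ Icc m M, (√(ρ (-i).toNat) - 1) ^ 2 := by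
      rw [← insert_Icc_left_eq_Icc_sub_one (by omega), sum_insert (by simp)]
    rw [hsplit]
    have hstep := mul_hellingerAffinity_piCond_le hg hg0 hρ (by omega : m - 1 ≤ M) hxy
    have hA1 := hellingerAffinity_le_one (fun ζ => piCond_nonneg hg0 ζ x)
      (fun ζ => piCond_nonneg hg0 ζ y) (sum_piCond_eq_one hg hm x) (sum_piCond_eq_one hg hm y)
    nlinarith [sq_nonneg (√(ρ (-(m - 1)).toNat) - 1)]

end Chain

lemma exists_div_le_of_continuous {X : Type*} [TopologicalSpace X] [CompactSpace X] {g : X → ℝ}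
    (hg : Continuous g) (hpos : ∀ x, 0 < g x) : ∃ R > 0, ∀ x y, g x / g y ≤ R := by
  obtain ⟨C₁, hC₁⟩ := (isCompact_range hg).bddAbove
  obtain ⟨C₂, hC₂⟩ := (isCompact_range (hg.inv₀ fun x => (hpos x).ne')).bddAbove
  refine ⟨max (C₁ * C₂) 1, by positivity, fun x y => le_max_of_le_left ?_⟩
  rw [div_eq_mul_inv]
  exact mul_le_mul (hC₁ ⟨x, rfl⟩) (hC₂ ⟨y, rfl⟩) (inv_pos.2 (hpos y)).le
    ((hpos x).le.trans (hC₁ ⟨x, rfl⟩))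

section Variation

variable {S : Type*} {g : (ℕ → S) → ℝ} {R : ℝ}

lemma div_le_rhoVar (hR : ∀ x y, g x / g y ≤ R) {k : ℕ} {a c : ℕ → S}
    (h : ∀ i ≤ k, a i = c i) : g a / g c ≤ rhoVar g k :=
  le_csSup ⟨R, by rintro _ ⟨x, y, -, rfl⟩; exact hR x y⟩ ⟨a, c, h, rfl⟩

lemma le_rhoVar_mul (hpos : ∀ x, 0 < g x) (hR : ∀ x y, g x / g y ≤ R) {k : ℕ} {a c : ℕ → S}
    (h : ∀ i ≤ k, a i = c i) : g a ≤ rhoVar g k * g c :=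
  (div_le_iff₀ (hpos c)).1 (div_le_rhoVar hR h)

lemma one_le_rhoVar [Nonempty S] (hpos : ∀ x, 0 < g x) (hR : ∀ x y, g x / g y ≤ R) (k : ℕ) :
    1 ≤ rhoVar g k := by
  obtain ⟨a⟩ : Nonempty (ℕ → S) := inferInstance
  simpa [div_self (hpos a).ne'] using div_le_rhoVar hR (k := k) (a := a) (c := a) fun _ _ => rfl

lemma rhoVar_le (hR : ∀ x y, g x / g y ≤ R) (hR0 : 0 ≤ R) (k : ℕ) : rhoVar g k ≤ R :=
  Real.sSup_le (by rintro _ ⟨x, y, -, rfl⟩; exact hR x y) hR0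

lemma sqrt_rhoVar_sub_one_sq_le [Nonempty S] (hpos : ∀ x, 0 < g x) (hR : ∀ x y, g x / g y ≤ R)
    (hR0 : 0 ≤ R) (k : ℕ) :
    (√(rhoVar g k) - 1) ^ 2
      ≤ Real.log (rhoVar g k) ^ 2 / 4 + R / 4 * Real.log (rhoVar g k) ^ 3 := by
  have h1 := one_le_rhoVar hpos hR k
  refine (sqrt_sub_one_sq_le h1).trans ?_
  gcongr
  · exact pow_nonneg (Real.log_nonneg h1) 3
  · exact rhoVar_le hR hR0 k

end Variation

lemma Bsum_sub_one_le (b : ℕ → ℕ) (n : ℕ) : Bsum b (n - 1) ≤ Bsum b n :=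
  sum_le_sum_of_subset (Icc_subset_Icc_right (Nat.sub_le n 1))

lemma sum_Icc_neg_toNat_le {f : ℕ → ℝ} (hf : ∀ j, 0 ≤ f j) (A B : ℕ) :
    ∑ i ∈ Icc (1 - (B : ℤ)) (-(A : ℤ)), f (-i).toNat ≤ ∑ j ∈ Icc A (B - 1), f j := by
  rw [← sum_image (g := fun i : ℤ => (-i).toNat) fun i hi j hj h => by
    simp only [coe_Icc, Set.mem_Icc] at hi hj h; omega]
  exact sum_le_sum_of_subset_of_nonneg (fun j => by simp only [mem_image, mem_Icc]; omega)
    fun j _ _ => hf j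

theorem dSeq_le_log_rho_general {S : Type*} [Fintype S] [DecidableEq S]
    [MeasurableSpace S] [TopologicalSpace S]
    (g : (ℕ → S) → ℝ) (hg : MemG g) (hgpos : ∀ x, 0 < g x) (hgcont : Continuous g)
    (b : ℕ → ℕ)
    (N : ℕ) :
    ∃ K > (0 : ℝ), ∀ n : ℕ, N + 1 ≤ n →
      dSeq g b n ≤ Real.sqrt (∑ i ∈ Finset.Icc (Bsum b (n - 1)) (Bsum b n - 1),
        ((Real.log (rhoVar g i)) ^ 2 / 4 + K * (Real.log (rhoVar g i)) ^ 3)) := by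
  obtain ⟨R, hR0, hR⟩ := exists_div_le_of_continuous hgcont hgpos
  refine ⟨R / 4, by positivity, fun n _ => Real.sSup_le ?_ (Real.sqrt_nonneg _)⟩
  rintro _ ⟨x, y, hxy, rfl⟩
  have : Nonempty S := ⟨x 0⟩
  have hJ : Jlo b n ≤ Jhi b n + 1 := by have := Bsum_sub_one_le b n; unfold Jlo Jhi; omega
  have hA := one_sub_le_hellingerAffinity_piCond hg.2.2 hg.2.1
    (fun _ _ _ => le_rhoVar_mul hgpos hR) hJ fun i hi => hxy i (by unfold Jhi at hi; omega)
  refine (le_abs_self _).trans (Real.abs_le_sqrt ?_)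
  calc _ ≤ 2 * (1 - hellingerAffinity (piCond g (Jlo b n) (Jhi b n) · x)
          (piCond g (Jlo b n) (Jhi b n) · y)) :=
        half_sum_abs_sub_sq_le (fun ζ => piCond_nonneg hg.2.1 ζ x)
          (fun ζ => piCond_nonneg hg.2.1 ζ y) (sum_piCond_eq_one hg.2.2 hJ x)
          (sum_piCond_eq_one hg.2.2 hJ y)
    _ ≤ ∑ i ∈ Icc (Jlo b n) (Jhi b n), (√(rhoVar g (-i).toNat) - 1) ^ 2 := by linarith
    _ ≤ ∑ j ∈ Icc (Bsum b (n - 1)) (Bsum b n - 1), (√(rhoVar g j) - 1) ^ 2 :=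
        sum_Icc_neg_toNat_le (fun j => sq_nonneg (√(rhoVar g j) - 1)) _ _
    _ ≤ _ := sum_le_sum fun j _ => sqrt_rhoVar_sub_one_sq_le hgpos hR hR0.le j

/-- **Corollary.**  Let `g ∈ 𝒢` be positive and continuous, `B = (b_n)` a
sequence of positive integers, and suppose `N ≥ 1` satisfies
`ρ_{[0,B_N]}(g) < (√2+1)²`.  Then there is `K > 0` such that for all `n ≥ N + 1`,
`d_n(g,B) ≤ √(∑_{i=B_{n-1}}^{B_n - 1} ((log ρ_{[0,i]}(g))²/4 + K (log ρ_{[0,i]}(g))³))`. -/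
theorem dSeq_le_log_rho {S : Type*} [Fintype S] [DecidableEq S]
    [MeasurableSpace S] [TopologicalSpace S] [DiscreteTopology S] [BorelSpace S]
    (hS : 2 ≤ Fintype.card S)
    (g : (ℕ → S) → ℝ) (hg : MemG g) (hgpos : ∀ x, 0 < g x) (hgcont : Continuous g)
    (b : ℕ → ℕ) (hb : ∀ n, 1 ≤ n → 0 < b n)
    (N : ℕ) (hN : 1 ≤ N) (hρ : rhoVar g (Bsum b N) < (Real.sqrt 2 + 1) ^ 2) :
    ∃ K > (0 : ℝ), ∀ n : ℕ, N + 1 ≤ n →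
      dSeq g b n ≤ Real.sqrt (∑ i ∈ Finset.Icc (Bsum b (n - 1)) (Bsum b n - 1),
        ((Real.log (rhoVar g i)) ^ 2 / 4 + K * (Real.log (rhoVar g i)) ^ 3)) :=
  dSeq_le_log_rho_general g hg hgpos hgcont b N

end
end

section
/- Let g ∈ 𝒢 be positive with ρ_{[0,n]}(g) < ∞, and let n ≥ 1. If x, y ∈ X₊ satisfy x_i = y_i for all 0 ≤ i ≤ n − 1, then ∑_{s∈S} |g(sx) − g(sy)| ≤ ρ_{[0,n]}(g) − 1. -/
open Filter Topology MeasureTheory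

noncomputable section

/-! If `g(sx) ≤ ρ g(sy)` and `g(sy) ≤ ρ g(sx)` for every symbol `s`, then
`|g(sx) - g(sy)| ≤ (ρ - 1) min (g(sx), g(sy)) ≤ (ρ - 1) g(sy)`, and summing over `s`
uses `∑ₛ g(sy) = 1`. Both comparisons hold with `ρ = ρ_{[0,n]}(g)` because prepending
`s` turns agreement on `[0, n)` into agreement on `[0, n]`. -/

theorem abs_sub_le_mul_min_of_le_mul {a b ρ : ℝ} (hab : a ≤ ρ * b) (hba : b ≤ ρ * a) :
    |a - b| ≤ (ρ - 1) * min a b := by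
  rcases le_total a b with h | h
  · rw [abs_sub_comm, abs_of_nonneg (sub_nonneg.mpr h), min_eq_left h]
    linarith
  · rw [abs_of_nonneg (sub_nonneg.mpr h), min_eq_right h]
    linarith

theorem Finset.sum_abs_sub_le_of_le_mul {ι : Type*} (t : Finset ι) {a b : ι → ℝ} {ρ : ℝ}
    (hρ : 1 ≤ ρ) (hab : ∀ i ∈ t, a i ≤ ρ * b i) (hba : ∀ i ∈ t, b i ≤ ρ * a i) :
    ∑ i ∈ t, |a i - b i| ≤ (ρ - 1) * ∑ i ∈ t, b i :=
  calc ∑ i ∈ t, |a i - b i|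
      ≤ ∑ i ∈ t, (ρ - 1) * min (a i) (b i) :=
        Finset.sum_le_sum fun i hi => abs_sub_le_mul_min_of_le_mul (hab i hi) (hba i hi)
    _ ≤ ∑ i ∈ t, (ρ - 1) * b i :=
        Finset.sum_le_sum fun i _ => mul_le_mul_of_nonneg_left (min_le_right _ _) (by linarith)
    _ = (ρ - 1) * ∑ i ∈ t, b i := (Finset.mul_sum ..).symm

theorem cons_eq_cons_of_forall_lt {S : Type*} {n : ℕ} {x y : ℕ → S}
    (hxy : ∀ i < n, x i = y i) (s : S) : ∀ i ≤ n, cons s x i = cons s y i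
  | 0, _ => rfl
  | i + 1, hi => hxy i hi

section rhoVar

variable {S : Type*} {f : (ℕ → S) → ℝ} {n : ℕ}

theorem div_le_rhoVar_s6
    (hf : BddAbove {r : ℝ | ∃ x y : ℕ → S, (∀ i ≤ n, x i = y i) ∧ r = f x / f y})
    {x y : ℕ → S} (hxy : ∀ i ≤ n, x i = y i) : f x / f y ≤ rhoVar f n :=
  le_csSup hf ⟨x, y, hxy, rfl⟩

theorem le_rhoVar_mul_s6
    (hf : BddAbove {r : ℝ | ∃ x y : ℕ → S, (∀ i ≤ n, x i = y i) ∧ r = f x / f y})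
    {x y : ℕ → S} (hy : 0 < f y) (hxy : ∀ i ≤ n, x i = y i) : f x ≤ rhoVar f n * f y :=
  (div_le_iff₀ hy).mp (div_le_rhoVar_s6 hf hxy)

theorem one_le_rhoVar_s6
    (hf : BddAbove {r : ℝ | ∃ x y : ℕ → S, (∀ i ≤ n, x i = y i) ∧ r = f x / f y})
    {x : ℕ → S} (hx : f x ≠ 0) : 1 ≤ rhoVar f n := by
  simpa [div_self hx] using div_le_rhoVar_s6 hf (x := x) (y := x) fun _ _ => rfl

end rhoVar

theorem sum_abs_sub_le_rho_general {S : Type*} [Fintype S] [MeasurableSpace S]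
    (g : (ℕ → S) → ℝ) (hg : MemG g) (hgpos : ∀ x, 0 < g x)
    (n : ℕ)
    (hfin : BddAbove {r : ℝ | ∃ x y : ℕ → S, (∀ i ≤ n, x i = y i) ∧ r = g x / g y})
    (x y : ℕ → S) (hxy : ∀ i < n, x i = y i) :
    ∑ s : S, |g (cons s x) - g (cons s y)| ≤ rhoVar g n - 1 := by
  have hyx : ∀ i < n, y i = x i := fun i hi => (hxy i hi).symm
  calc ∑ s : S, |g (cons s x) - g (cons s y)|
      ≤ (rhoVar g n - 1) * ∑ s : S, g (cons s y) :=
        Finset.univ.sum_abs_sub_le_of_le_mul (one_le_rhoVar_s6 hfin (hgpos x).ne')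
          (fun s _ => le_rhoVar_mul_s6 hfin (hgpos _) (cons_eq_cons_of_forall_lt hxy s))
          (fun s _ => le_rhoVar_mul_s6 hfin (hgpos _) (cons_eq_cons_of_forall_lt hyx s))
    _ = rhoVar g n - 1 := by rw [hg.2.2 y, mul_one]

/-- If `g ∈ 𝒢` is positive with `ρ_{[0,n]}(g) < ∞` (i.e. the defining set of ratios
is bounded above) and `x, y ∈ X₊` agree on the coordinates `0 ≤ i ≤ n - 1`, then
`∑_{s ∈ S} |g (s x) - g (s y)| ≤ ρ_{[0,n]}(g) - 1`. -/
theorem sum_abs_sub_le_rho {S : Type*} [Fintype S] [MeasurableSpace S]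
    (hS : 2 ≤ Fintype.card S)
    (g : (ℕ → S) → ℝ) (hg : MemG g) (hgpos : ∀ x, 0 < g x)
    (n : ℕ) (hn : 1 ≤ n)
    (hfin : BddAbove {r : ℝ | ∃ x y : ℕ → S, (∀ i ≤ n, x i = y i) ∧ r = g x / g y})
    (x y : ℕ → S) (hxy : ∀ i < n, x i = y i) :
    ∑ s : S, |g (cons s x) - g (cons s y)| ≤ rhoVar g n - 1 :=
  sum_abs_sub_le_rho_general g hg hgpos n hfin x y hxy

end
end
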